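/- For every δ > 0 the noisy voter model on any finite graph with n vertices mixes in time O(log n): for every ε ∈ (0,1), if t ≥ ((2δ+1)/(2δ))·log(n/ε), then for every initial configuration η ∈ {0,1}^{V(G)} and every stationary distribution μ one has ‖P_t(η,·) − μ‖ ≤ ε; in particular the total variation mixing time satisfies t_mix(ε) ≤ ((2δ+1)/(2δ))·log(n/ε). -/

import Mathlib

/-!
Measure a function `h` of the configuration by its total oscillation
`osc h = ∑ₓ sup_η |h ηˣ - h η|`, where `ηˣ` is `η` with the spin at `x` flipped. Adding `n` to
the generator gives `Q + n = ∑ₓ Kₓ`, where `Kₓ` resamples the spin at `x`. Flipping `x` leaves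
`Kₓ h` unchanged, because the two flip rates at `x` add up to one, and any other `K_y` raises the
oscillation at `x` by at most `osc_x (rate at y) · osc_y h`. Summing these bounds gives
`osc ((Q + n) h) ≤ (n - 2δ/(2δ+1)) osc h`, and expanding the exponential series yields
`osc (P_t h) ≤ e^{-2δt/(2δ+1)} osc h`. The indicator of an event has total oscillation at most
`n`, so averaging against the stationary `μ` gives `|P_t(η, A) - μ(A)| ≤ n e^{-2δt/(2δ+1)}`.
-/

open Finset

/-- Total variation distance between two (probability) measures on a finite set:
the maximum over all events `A` of `|μ₁(A) - μ₂(A)|`. -/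
noncomputable def tvDist {S : Type*} [Fintype S] (μ ν : S → ℝ) : ℝ :=
  Finset.univ.powerset.sup' (Finset.powerset_nonempty _) fun A =>
    |∑ s ∈ A, μ s - ∑ s ∈ A, ν s|

/-- Flip rate of the noisy voter model with noise `δ` at vertex `x` in configuration `η`. -/
noncomputable def nvRate {V : Type*} [Fintype V] (G : SimpleGraph V) [DecidableRel G.Adj]
    (δ : ℝ) (x : V) (η : V → Bool) : ℝ :=
  (1 / (2 * δ + 1)) *
    ((1 / (G.degree x : ℝ)) * ((Finset.univ.filter fun y => G.Adj x y ∧ η y ≠ η x).card : ℝ) + δ)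

/-- The rate matrix of the noisy voter model: single-spin flips occur at rate `nvRate`,
transitions changing two or more spins have rate `0`, and diagonal entries make rows sum to `0`. -/
noncomputable def nvQ {V : Type*} [Fintype V] [DecidableEq V] (G : SimpleGraph V)
    [DecidableRel G.Adj] (δ : ℝ) : Matrix (V → Bool) (V → Bool) ℝ := fun η η' =>
  if η = η' then -∑ x, nvRate G δ x η
  else if (Finset.univ.filter fun v => η v ≠ η' v).card = 1 then
    ∑ x ∈ Finset.univ.filter (fun v => η v ≠ η' v), nvRate G δ x η
  else 0

open Matrix

section MatrixExp

open NormedSpace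

variable {ι : Type*} [Fintype ι] [DecidableEq ι]

namespace Matrix

theorem hasSum_exp_mulVec (M : Matrix ι ι ℝ) (v : ι → ℝ) :
    HasSum (fun k : ℕ => (k.factorial : ℝ)⁻¹ • (M ^ k *ᵥ v)) (exp M *ᵥ v) := by
  open scoped Matrix.Norms.Operator in
  have hs := (exp_series_hasSum_exp' (𝕂 := ℝ) M).map
    (AddMonoidHom.mk' (· *ᵥ v) fun A B => add_mulVec A B v)
    (continuous_id.matrix_mulVec continuous_const)
  simp only [Function.comp_def, AddMonoidHom.mk'_apply, smul_mulVec] at hs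
  exact hs

theorem exp_mulVec_eq_self {M : Matrix ι ι ℝ} {v : ι → ℝ} (hv : M *ᵥ v = 0) :
    exp M *ᵥ v = v := by
  refine (hasSum_exp_mulVec M v).unique ?_
  convert hasSum_ite_eq 0 v using 1
  funext k
  cases k with
  | zero => simp
  | succ k => simp [pow_succ, ← mulVec_mulVec, hv]

theorem vecMul_exp_eq_self {M : Matrix ι ι ℝ} {v : ι → ℝ} (hv : v ᵥ* M = 0) :
    v ᵥ* exp M = v := by
  rw [← mulVec_transpose, ← exp_transpose, exp_mulVec_eq_self (by rwa [mulVec_transpose])]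

theorem exp_smul_one (s : ℝ) : exp (s • (1 : Matrix ι ι ℝ)) = Real.exp s • 1 := by
  rw [← diagonal_one, ← diagonal_smul, exp_diagonal]
  ext i j
  simp [diagonal_apply, one_apply, Real.exp_eq_exp_ℝ]

theorem exp_smul_eq_exp_smul_add_smul_one (M : Matrix ι ι ℝ) (t a : ℝ) :
    exp (t • M) = Real.exp (-(t * a)) • exp (t • (M + a • 1)) := by
  have hsplit : t • M = (-(t * a)) • (1 : Matrix ι ι ℝ) + t • (M + a • 1) := by module
  rw [hsplit, exp_add_of_commute _ _ ((Commute.one_left _).smul_left _), exp_smul_one,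
    smul_one_mul]

end Matrix

namespace Seminorm

variable (p : Seminorm ℝ (ι → ℝ))

theorem map_pow_mulVec_le {M : Matrix ι ι ℝ} {b : ℝ} (hb : 0 ≤ b)
    (hM : ∀ v, p (M *ᵥ v) ≤ b * p v) (k : ℕ) (v : ι → ℝ) : p (M ^ k *ᵥ v) ≤ b ^ k * p v := by
  induction k with
  | zero => simp
  | succ k ih =>
    rw [pow_succ', ← mulVec_mulVec, pow_succ', mul_assoc]
    exact (hM _).trans (mul_le_mul_of_nonneg_left ih hb)

theorem map_exp_mulVec_le (hp : Continuous p) {M : Matrix ι ι ℝ} {b : ℝ}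
    (hM : ∀ v, p (M *ᵥ v) ≤ b * p v) (v : ι → ℝ) : p (exp M *ᵥ v) ≤ Real.exp b * p v := by
  rcases lt_or_ge b 0 with hb | hb
  · -- a seminorm contracted by a negative factor vanishes identically
    have hp0 : ∀ w, p w = 0 := fun w =>
      le_antisymm (nonpos_of_mul_nonneg_right ((apply_nonneg p _).trans (hM w)) hb)
        (apply_nonneg p w)
    simp [hp0]
  have hexp : HasSum (fun k : ℕ => (k.factorial : ℝ)⁻¹ • b ^ k * p v) (Real.exp b * p v) := by
    rw [Real.exp_eq_exp_ℝ]
    exact (exp_series_hasSum_exp' b).mul_right _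
  refine le_of_tendsto_of_tendsto' ((hp.tendsto _).comp (hasSum_exp_mulVec M v)) hexp fun s =>
    (le_sum_of_subadditive p (map_zero p).le (map_add_le_add p) _ _).trans
      (sum_le_sum fun k _ => ?_)
  rw [map_smul_eq_mul, Real.norm_of_nonneg (by positivity), smul_eq_mul, mul_assoc]
  exact mul_le_mul_of_nonneg_left (map_pow_mulVec_le p hb hM k v) (by positivity)

theorem map_exp_smul_mulVec_le (hp : Continuous p) {M : Matrix ι ι ℝ} {a c : ℝ}
    (hM : ∀ v, p ((M + a • 1) *ᵥ v) ≤ (a - c) * p v) {t : ℝ} (ht : 0 ≤ t) (v : ι → ℝ) :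
    p (exp (t • M) *ᵥ v) ≤ Real.exp (-c * t) * p v := by
  have htM : ∀ v, p ((t • (M + a • 1)) *ᵥ v) ≤ t * (a - c) * p v := fun v => by
    rw [smul_mulVec, map_smul_eq_mul, Real.norm_of_nonneg ht, mul_assoc]
    exact mul_le_mul_of_nonneg_left (hM v) ht
  rw [exp_smul_eq_exp_smul_add_smul_one M t a, smul_mulVec, map_smul_eq_mul,
    Real.norm_of_nonneg (Real.exp_nonneg _)]
  calc Real.exp (-(t * a)) * p (exp (t • (M + a • 1)) *ᵥ v)
      ≤ Real.exp (-(t * a)) * (Real.exp (t * (a - c)) * p v) :=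
        mul_le_mul_of_nonneg_left (map_exp_mulVec_le p hp htM v) (Real.exp_nonneg _)
    _ = Real.exp (-c * t) * p v := by rw [← mul_assoc, ← Real.exp_add]; ring_nf

end Seminorm

end MatrixExp

theorem tvDist_le_of_vecMul_eq_self {S : Type*} [Fintype S] {P : Matrix S S ℝ} {μ : S → ℝ}
    (hμ0 : ∀ s, 0 ≤ μ s) (hμ1 : ∑ s, μ s = 1) (hμP : μ ᵥ* P = μ) {C : ℝ} (s₀ : S)
    (hP : ∀ (A : Finset S) s, |∑ σ ∈ A, P s₀ σ - ∑ σ ∈ A, P s σ| ≤ C) :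
    tvDist (P s₀) μ ≤ C := by
  refine sup'_le _ _ fun A _ => ?_
  have hμA : ∑ σ ∈ A, μ σ = ∑ s, μ s * ∑ σ ∈ A, P s σ := by
    conv_lhs => rw [← hμP]
    simp only [vecMul, dotProduct, mul_sum]
    exact sum_comm
  have hdiff : ∑ σ ∈ A, P s₀ σ - ∑ σ ∈ A, μ σ
      = ∑ s, μ s * (∑ σ ∈ A, P s₀ σ - ∑ σ ∈ A, P s σ) := by
    simp only [hμA, mul_sub, sum_sub_distrib, ← sum_mul, hμ1, one_mul]
  calc |∑ σ ∈ A, P s₀ σ - ∑ σ ∈ A, μ σ|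
      ≤ ∑ s, μ s * |∑ σ ∈ A, P s₀ σ - ∑ σ ∈ A, P s σ| := by
        rw [hdiff]
        refine (abs_sum_le_sum_abs _ _).trans_eq (sum_congr rfl fun s _ => ?_)
        rw [abs_mul, abs_of_nonneg (hμ0 s)]
    _ ≤ ∑ s, μ s * C := sum_le_sum fun s _ => mul_le_mul_of_nonneg_left (hP A s) (hμ0 s)
    _ = C := by rw [← sum_mul, hμ1, one_mul]

section Flip

variable {V : Type*} [DecidableEq V]

def flipAt (x : V) (η : V → Bool) : V → Bool := Function.update η x (!η x)

@[simp] theorem flipAt_self (x : V) (η : V → Bool) : flipAt x η x = !η x := by simp [flipAt]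

theorem flipAt_of_ne {x v : V} (η : V → Bool) (h : v ≠ x) : flipAt x η v = η v :=
  Function.update_of_ne h _ _

@[simp] theorem flipAt_flipAt (x : V) (η : V → Bool) : flipAt x (flipAt x η) = η := by
  simp [flipAt]

theorem flipAt_comm (x y : V) (η : V → Bool) : flipAt x (flipAt y η) = flipAt y (flipAt x η) := by
  by_cases hxy : x = y
  · rw [hxy]
  · ext v
    by_cases hx : v = x <;> by_cases hy : v = y <;> simp_all [flipAt, Function.update_apply]

theorem flipAt_ne_self (x : V) (η : V → Bool) : flipAt x η ≠ η := fun h => by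
  simpa using congrFun h x

theorem update_eq_self_or_flipAt (η : V → Bool) (x : V) (b : Bool) :
    Function.update η x b = η ∨ Function.update η x b = flipAt x η := by
  rcases Bool.eq_or_eq_not b (η x) with rfl | rfl
  · exact Or.inl (Function.update_eq_self x η)
  · exact Or.inr rfl

theorem eq_flipAt_iff [Fintype V] {η η' : V → Bool} {x : V} :
    η' = flipAt x η ↔ univ.filter (fun v => η v ≠ η' v) = {x} := by
  constructor
  · rintro rfl
    ext v
    by_cases hv : v = x <;> simp [hv, flipAt_of_ne]
  · intro h
    ext v
    have hv := Finset.ext_iff.1 h v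
    by_cases hvx : v = x
    · subst hvx
      simp only [mem_filter, mem_univ, true_and, mem_singleton, iff_true] at hv
      rw [flipAt_self]
      revert hv; cases η v <;> cases η' v <;> simp
    · simp [hvx, flipAt_of_ne] at hv ⊢
      exact hv.symm

end Flip

section Oscillation

variable {V : Type*} [Fintype V] [DecidableEq V]

def flipDiff (x : V) (η : V → Bool) : ((V → Bool) → ℝ) →ₗ[ℝ] ℝ :=
  LinearMap.proj (R := ℝ) (φ := fun _ => ℝ) (flipAt x η) - LinearMap.proj η

noncomputable def oscAt (x : V) : Seminorm ℝ ((V → Bool) → ℝ) :=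
  univ.sup fun η => (normSeminorm ℝ ℝ).comp (flipDiff x η)

noncomputable def osc : Seminorm ℝ ((V → Bool) → ℝ) := ∑ x, oscAt x

theorem abs_sub_le_oscAt (x : V) (h : (V → Bool) → ℝ) (η : V → Bool) :
    |h (flipAt x η) - h η| ≤ oscAt x h :=
  Seminorm.le_finset_sup_apply (p := fun η => (normSeminorm ℝ ℝ).comp (flipDiff x η))
    (mem_univ η)

theorem oscAt_le {x : V} {h : (V → Bool) → ℝ} {r : ℝ} (hr : 0 ≤ r)
    (hh : ∀ η, |h (flipAt x η) - h η| ≤ r) : oscAt x h ≤ r :=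
  Seminorm.finset_sup_apply_le (p := fun η => (normSeminorm ℝ ℝ).comp (flipDiff x η)) hr
    fun η _ => hh η

theorem osc_apply (h : (V → Bool) → ℝ) : osc h = ∑ x, oscAt x h := by
  simp [osc]

theorem continuous_osc : Continuous (osc : ((V → Bool) → ℝ) → ℝ) :=
  Seminorm.continuous_finsetSum fun x _ =>
    Seminorm.continuous_finsetSup (p := fun η => (normSeminorm ℝ ℝ).comp (flipDiff x η))
      fun η _ => continuous_norm.comp (LinearMap.continuous_of_finiteDimensional (flipDiff x η))

theorem abs_update_sub_le_oscAt (h : (V → Bool) → ℝ) (η : V → Bool) (x : V) (b : Bool) :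
    |h (Function.update η x b) - h η| ≤ oscAt x h := by
  rcases update_eq_self_or_flipAt η x b with hb | hb <;> rw [hb]
  · simp
  · exact abs_sub_le_oscAt x h η

theorem abs_sub_le_osc (h : (V → Bool) → ℝ) (η τ : V → Bool) : |h τ - h η| ≤ osc h := by
  have key : ∀ s : Finset V,
      |h (fun v => if v ∈ s then τ v else η v) - h η| ≤ ∑ x ∈ s, oscAt x h := by
    intro s
    induction s using Finset.induction_on with
    | empty => simp
    | insert a s ha ih =>
      have hupd : (fun v => if v ∈ insert a s then τ v else η v)
          = Function.update (fun v => if v ∈ s then τ v else η v) a (τ a) := by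
        ext v
        by_cases hv : v = a <;> simp [hv]
      rw [hupd, sum_insert ha]
      exact (abs_sub_le _ _ _).trans (add_le_add (abs_update_sub_le_oscAt h _ a _) ih)
  simpa [osc_apply] using key univ

def siteUpdate (r : (V → Bool) → ℝ) (y : V) (h : (V → Bool) → ℝ) : (V → Bool) → ℝ :=
  fun η => (1 - r η) * h η + r η * h (flipAt y η)

variable {r : (V → Bool) → ℝ}

theorem oscAt_siteUpdate_self {y : V} (hr : ∀ η, r η + r (flipAt y η) = 1)
    (h : (V → Bool) → ℝ) : oscAt y (siteUpdate r y h) = 0 := by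
  refine le_antisymm (oscAt_le le_rfl fun η => ?_) (apply_nonneg _ _)
  have hflip : r (flipAt y η) = 1 - r η := by linarith [hr η]
  simp only [siteUpdate, flipAt_flipAt, hflip]
  ring_nf
  simp

theorem oscAt_siteUpdate_le (hr0 : ∀ η, 0 ≤ r η) (hr1 : ∀ η, r η ≤ 1) (x y : V)
    (h : (V → Bool) → ℝ) : oscAt x (siteUpdate r y h) ≤ oscAt x h + oscAt x r * oscAt y h := by
  refine oscAt_le (by positivity) fun η => ?_
  set ξ := flipAt x η
  have hsplit : siteUpdate r y h ξ - siteUpdate r y h η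
      = (1 - r ξ) * (h ξ - h η) + r ξ * (h (flipAt x (flipAt y η)) - h (flipAt y η))
        + (r ξ - r η) * (h (flipAt y η) - h η) := by
    simp only [siteUpdate, ξ, flipAt_comm x y]
    ring
  have hr1' : 0 ≤ 1 - r ξ := sub_nonneg.2 (hr1 ξ)
  rw [hsplit]
  calc _ ≤ |(1 - r ξ) * (h ξ - h η)| + |r ξ * (h (flipAt x (flipAt y η)) - h (flipAt y η))|
          + |(r ξ - r η) * (h (flipAt y η) - h η)| := abs_add_three _ _ _
    _ ≤ (1 - r ξ) * oscAt x h + r ξ * oscAt x h + oscAt x r * oscAt y h := by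
        simp only [abs_mul, abs_of_nonneg hr1', abs_of_nonneg (hr0 ξ)]
        gcongr ?_ + ?_ + ?_
        · exact mul_le_mul_of_nonneg_left (abs_sub_le_oscAt x h η) hr1'
        · exact mul_le_mul_of_nonneg_left (abs_sub_le_oscAt x h _) (hr0 ξ)
        · exact mul_le_mul (abs_sub_le_oscAt x r η) (abs_sub_le_oscAt y h η) (abs_nonneg _)
            (apply_nonneg _ _)
    _ = oscAt x h + oscAt x r * oscAt y h := by ring

end Oscillation

section NoisyVoter

variable {V : Type*} [Fintype V] (G : SimpleGraph V) [DecidableRel G.Adj] {δ : ℝ}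

theorem card_adj_ne_le_degree (x : V) (η : V → Bool) :
    #{y | G.Adj x y ∧ η y ≠ η x} ≤ G.degree x := by
  rw [← G.card_neighborFinset_eq_degree, G.neighborFinset_eq_filter]
  exact card_le_card (monotone_filter_right _ fun _ _ => And.left)

variable {G}

theorem nvRate_nonneg (hδ : 0 ≤ δ) (x : V) (η : V → Bool) : 0 ≤ nvRate G δ x η := by
  unfold nvRate; positivity

theorem nvRate_le_one (hδ : 0 ≤ δ) (x : V) (η : V → Bool) : nvRate G δ x η ≤ 1 := by
  have hfrac : (1 / (G.degree x : ℝ)) * #{y | G.Adj x y ∧ η y ≠ η x} ≤ 1 := by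
    rw [one_div_mul_eq_div]
    exact div_le_one_of_le₀ (mod_cast card_adj_ne_le_degree G x η) (Nat.cast_nonneg _)
  unfold nvRate
  rw [one_div_mul_eq_div, div_le_one (by positivity)]
  linarith

variable [DecidableEq V]

variable (G) in
theorem card_adj_ne_add_card_adj_ne_flipAt (x : V) (η : V → Bool) :
    #{y | G.Adj x y ∧ η y ≠ η x} + #{y | G.Adj x y ∧ flipAt x η y ≠ flipAt x η x}
      = G.degree x := by
  have hflip : ({y | G.Adj x y ∧ flipAt x η y ≠ flipAt x η x} : Finset V)
      = ({y | G.Adj x y} : Finset V).filter fun y => ¬ η y ≠ η x := by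
    rw [filter_filter]
    refine filter_congr fun y _ => and_congr_right fun hxy => ?_
    rw [flipAt_of_ne η (G.ne_of_adj hxy).symm, flipAt_self]
    cases η y <;> cases η x <;> simp
  rw [hflip, ← filter_filter, card_filter_add_card_filter_not, ← G.neighborFinset_eq_filter,
    G.card_neighborFinset_eq_degree]

theorem nvRate_add_nvRate_flipAt (hδ : 0 ≤ δ) {x : V} (hx : 0 < G.degree x) (η : V → Bool) :
    nvRate G δ x η + nvRate G δ x (flipAt x η) = 1 := by
  have hx' : (G.degree x : ℝ) ≠ 0 := by positivity
  have hcount := congrArg (Nat.cast (R := ℝ)) (card_adj_ne_add_card_adj_ne_flipAt G x η)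
  push_cast at hcount
  unfold nvRate
  field_simp
  linear_combination hcount

theorem oscAt_nvRate_le (hδ : 0 ≤ δ) {x y : V} (hxy : x ≠ y) :
    oscAt x (nvRate G δ y) ≤ if G.Adj y x then 1 / ((2 * δ + 1) * G.degree y) else 0 := by
  refine oscAt_le (by positivity) fun η => ?_
  have hcount : |(#{z | G.Adj y z ∧ flipAt x η z ≠ flipAt x η y} : ℝ)
      - #{z | G.Adj y z ∧ η z ≠ η y}| ≤ if G.Adj y x then 1 else 0 := by
    simp only [card_filter, Nat.cast_sum, Nat.cast_ite, Nat.cast_one, Nat.cast_zero,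
      ← sum_sub_distrib, flipAt_of_ne η hxy.symm]
    rw [sum_eq_single x (fun z _ hzx => by simp [flipAt_of_ne η hzx]) (by simp)]
    by_cases hyx : G.Adj y x
    · simp only [hyx, true_and, flipAt_self]
      cases η x <;> cases η y <;> norm_num
    · simp [hyx]
  have hdiff : nvRate G δ y (flipAt x η) - nvRate G δ y η
      = 1 / ((2 * δ + 1) * G.degree y) * ((#{z | G.Adj y z ∧ flipAt x η z ≠ flipAt x η y} : ℝ)
        - #{z | G.Adj y z ∧ η z ≠ η y}) := by
    rw [← one_div_mul_one_div]; unfold nvRate; ring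
  rw [hdiff, abs_mul, abs_of_nonneg (by positivity)]
  split_ifs at hcount ⊢ with hyx
  · exact mul_le_of_le_one_right (by positivity) hcount
  · simp [abs_nonpos_iff.1 hcount]

theorem sum_oscAt_nvRate_le (hδ : 0 ≤ δ) (y : V) :
    ∑ x ∈ univ.erase y, oscAt x (nvRate G δ y) ≤ 1 / (2 * δ + 1) := by
  calc ∑ x ∈ univ.erase y, oscAt x (nvRate G δ y)
      ≤ ∑ x, if G.Adj y x then 1 / ((2 * δ + 1) * G.degree y) else 0 := by
        refine (sum_le_sum fun x hx => oscAt_nvRate_le hδ (ne_of_mem_erase hx)).trans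
          (sum_le_sum_of_subset_of_nonneg (erase_subset _ _) fun _ _ _ => by positivity)
    _ = G.degree y / ((2 * δ + 1) * G.degree y) := by
        rw [sum_ite, sum_const_zero, add_zero, sum_const, nsmul_eq_mul,
          ← G.neighborFinset_eq_filter, G.card_neighborFinset_eq_degree, mul_one_div]
    _ ≤ 1 / (2 * δ + 1) := by
        rw [div_mul_eq_div_div_swap]
        exact div_le_div_of_nonneg_right (div_self_le_one _) (by positivity)

theorem nvQ_apply (η η' : V → Bool) :
    nvQ G δ η η' = ∑ x, nvRate G δ x η *
      ((if η' = flipAt x η then 1 else 0) - if η' = η then 1 else 0) := by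
  by_cases hη : η = η'
  · subst hη
    simp [nvQ, fun x => (flipAt_ne_self x η).symm]
  · simp only [nvQ, if_neg hη, if_neg (Ne.symm hη), sub_zero, mul_ite, mul_one, mul_zero,
      eq_flipAt_iff]
    split_ifs with hcard
    · obtain ⟨a, ha⟩ := card_eq_one.1 hcard
      simp [ha]
    · refine (sum_eq_zero fun x _ => if_neg fun hx => hcard ?_).symm
      rw [hx, card_singleton]

theorem nvQ_mulVec_apply (h : (V → Bool) → ℝ) (η : V → Bool) :
    (nvQ G δ *ᵥ h) η = ∑ x, nvRate G δ x η * (h (flipAt x η) - h η) := by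
  simp only [mulVec, dotProduct, nvQ_apply, sum_mul]
  rw [sum_comm]
  simp [mul_sub, sub_mul, ite_mul, sum_sub_distrib]

theorem nvQ_add_card_smul_one_mulVec (h : (V → Bool) → ℝ) :
    (nvQ G δ + (Fintype.card V : ℝ) • 1) *ᵥ h = ∑ x, siteUpdate (nvRate G δ x) x h := by
  ext η
  simp only [add_mulVec, smul_mulVec, one_mulVec, Pi.add_apply, Pi.smul_apply, smul_eq_mul,
    nvQ_mulVec_apply, Finset.sum_apply, siteUpdate, sub_mul, mul_sub, one_mul, sum_add_distrib,
    sum_sub_distrib, sum_const, card_univ, nsmul_eq_mul]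
  ring

theorem oscAt_sum_siteUpdate_nvRate_le (hδ : 0 ≤ δ) (hdeg : ∀ v, 1 ≤ G.degree v)
    (h : (V → Bool) → ℝ) (x : V) :
    oscAt x (∑ y, siteUpdate (nvRate G δ y) y h)
      ≤ (Fintype.card V - 1) * oscAt x h
        + ∑ y ∈ univ.erase x, oscAt x (nvRate G δ y) * oscAt y h := by
  calc oscAt x (∑ y, siteUpdate (nvRate G δ y) y h)
      ≤ ∑ y, oscAt x (siteUpdate (nvRate G δ y) y h) :=
        le_sum_of_subadditive _ (map_zero _).le (map_add_le_add _) _ _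
    _ = ∑ y ∈ univ.erase x, oscAt x (siteUpdate (nvRate G δ y) y h) := by
        rw [← add_sum_erase _ _ (mem_univ x),
          oscAt_siteUpdate_self (nvRate_add_nvRate_flipAt hδ (hdeg x)), zero_add]
    _ ≤ ∑ y ∈ univ.erase x, (oscAt x h + oscAt x (nvRate G δ y) * oscAt y h) :=
        sum_le_sum fun y _ => oscAt_siteUpdate_le (nvRate_nonneg hδ y) (nvRate_le_one hδ y) x y h
    _ = (Fintype.card V - 1) * oscAt x h
        + ∑ y ∈ univ.erase x, oscAt x (nvRate G δ y) * oscAt y h := by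
        rw [sum_add_distrib, sum_const, card_erase_of_mem (mem_univ x), card_univ, nsmul_eq_mul,
          Nat.cast_pred (Fintype.card_pos_iff.2 ⟨x⟩)]

theorem osc_nvQ_add_card_smul_one_mulVec_le (hδ : 0 ≤ δ) (hdeg : ∀ v, 1 ≤ G.degree v)
    (h : (V → Bool) → ℝ) :
    osc ((nvQ G δ + (Fintype.card V : ℝ) • 1) *ᵥ h)
      ≤ (Fintype.card V - 2 * δ / (2 * δ + 1)) * osc h := by
  rw [nvQ_add_card_smul_one_mulVec, osc_apply, osc_apply]
  calc ∑ x, oscAt x (∑ y, siteUpdate (nvRate G δ y) y h)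
      ≤ ∑ x, ((Fintype.card V - 1) * oscAt x h
          + ∑ y ∈ univ.erase x, oscAt x (nvRate G δ y) * oscAt y h) :=
        sum_le_sum fun x _ => oscAt_sum_siteUpdate_nvRate_le hδ hdeg h x
    _ = (Fintype.card V - 1) * ∑ x, oscAt x h
          + ∑ y, (∑ x ∈ univ.erase y, oscAt x (nvRate G δ y)) * oscAt y h := by
        rw [sum_add_distrib, ← mul_sum]
        congr 1
        simp only [sum_mul]
        exact sum_comm' fun x y => by simp [ne_comm]
    _ ≤ (Fintype.card V - 1) * ∑ x, oscAt x h + ∑ y, 1 / (2 * δ + 1) * oscAt y h := by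
        gcongr with y
        exact sum_oscAt_nvRate_le hδ y
    _ = (Fintype.card V - 2 * δ / (2 * δ + 1)) * ∑ x, oscAt x h := by
        rw [← mul_sum]
        field_simp
        ring

theorem osc_exp_nvQ_mulVec_le (hδ : 0 ≤ δ) (hdeg : ∀ v, 1 ≤ G.degree v) {t : ℝ} (ht : 0 ≤ t)
    (h : (V → Bool) → ℝ) :
    osc (NormedSpace.exp (t • nvQ G δ) *ᵥ h) ≤ Real.exp (-(2 * δ / (2 * δ + 1)) * t) * osc h :=
  osc.map_exp_smul_mulVec_le continuous_osc (osc_nvQ_add_card_smul_one_mulVec_le hδ hdeg) ht h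

theorem abs_sum_exp_nvQ_sub_le (hδ : 0 ≤ δ) (hdeg : ∀ v, 1 ≤ G.degree v) {t : ℝ} (ht : 0 ≤ t)
    (A : Finset (V → Bool)) (η τ : V → Bool) :
    |∑ σ ∈ A, NormedSpace.exp (t • nvQ G δ) η σ - ∑ σ ∈ A, NormedSpace.exp (t • nvQ G δ) τ σ|
      ≤ Fintype.card V * Real.exp (-(2 * δ / (2 * δ + 1)) * t) := by
  set P := NormedSpace.exp (t • nvQ G δ)
  set f : (V → Bool) → ℝ := fun σ => if σ ∈ A then 1 else 0
  have hPf : ∀ η, ∑ σ ∈ A, P η σ = (P *ᵥ f) η := fun η => by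
    simp [f, mulVec, dotProduct]
  have hf : osc f ≤ Fintype.card V := by
    rw [osc_apply]
    refine (sum_le_sum fun x _ => oscAt_le zero_le_one fun η => ?_).trans_eq (by simp)
    simp only [f]
    split_ifs <;> norm_num
  rw [hPf, hPf]
  calc |(P *ᵥ f) η - (P *ᵥ f) τ|
      ≤ osc (P *ᵥ f) := abs_sub_le_osc _ τ η
    _ ≤ Real.exp (-(2 * δ / (2 * δ + 1)) * t) * osc f := osc_exp_nvQ_mulVec_le hδ hdeg ht f
    _ ≤ Fintype.card V * Real.exp (-(2 * δ / (2 * δ + 1)) * t) := by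
        rw [mul_comm]
        exact mul_le_mul_of_nonneg_right hf (Real.exp_nonneg _)

end NoisyVoter

theorem mul_exp_neg_le_of_inv_mul_log_le {n ε c t : ℝ} (hn : 0 ≤ n) (hε : 0 < ε) (hc : 0 < c)
    (ht : c⁻¹ * Real.log (n / ε) ≤ t) : n * Real.exp (-c * t) ≤ ε := by
  rcases hn.eq_or_lt with rfl | hn
  · simpa using hε.le
  have hnε : n ≤ ε * Real.exp (c * t) :=
    (div_le_iff₀' hε).1 ((Real.log_le_iff_le_exp (div_pos hn hε)).1 ((inv_mul_le_iff₀ hc).1 ht))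
  calc n * Real.exp (-c * t) ≤ ε * Real.exp (c * t) * Real.exp (-c * t) :=
        mul_le_mul_of_nonneg_right hnε (Real.exp_nonneg _)
    _ = ε := by rw [mul_assoc, ← Real.exp_add]; simp

/-- The noisy voter model mixes in time `O(log n)`: for every `ε ∈ (0,1)`, once
`t ≥ ((2δ+1)/(2δ))·log(n/ε)` we have `‖P_t(η,·) − μ‖ ≤ ε` for every initial configuration `η`
and every stationary distribution `μ`; in particular
`t_mix(ε) ≤ ((2δ+1)/(2δ))·log(n/ε)`. -/
theorem noisy_voter_mixing_time_log
    {V : Type*} [Fintype V] [DecidableEq V] (δ : ℝ) (hδ : 0 < δ)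
    (G : SimpleGraph V) [DecidableRel G.Adj] (hdeg : ∀ v, 1 ≤ G.degree v)
    (μ : (V → Bool) → ℝ) (hμ0 : ∀ σ, 0 ≤ μ σ) (hμ1 : ∑ σ, μ σ = 1)
    (hstat : Matrix.vecMul μ (nvQ G δ) = 0)
    (ε : ℝ) (hε : ε ∈ Set.Ioo (0 : ℝ) 1) :
    (∀ t : ℝ, ((2 * δ + 1) / (2 * δ)) * Real.log ((Fintype.card V : ℝ) / ε) ≤ t →
      ∀ η : V → Bool,
        tvDist (fun σ => NormedSpace.exp (t • nvQ G δ) η σ) μ ≤ ε) ∧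
    sInf {t : ℝ | 0 ≤ t ∧ ∀ η : V → Bool,
        tvDist (fun σ => NormedSpace.exp (t • nvQ G δ) η σ) μ ≤ ε} ≤
      ((2 * δ + 1) / (2 * δ)) * Real.log ((Fintype.card V : ℝ) / ε) := by
  obtain ⟨hε0, hε1⟩ := hε
  have hlog0 : 0 ≤ Real.log ((Fintype.card V : ℝ) / ε) := by
    rcases Nat.eq_zero_or_pos (Fintype.card V) with hn | hn
    · simp [hn]
    · exact Real.log_nonneg ((one_le_div hε0).2 (hε1.le.trans (mod_cast hn)))
  have hT : 0 ≤ ((2 * δ + 1) / (2 * δ)) * Real.log ((Fintype.card V : ℝ) / ε) :=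
    mul_nonneg (by positivity) hlog0
  have hmix : ∀ t : ℝ, ((2 * δ + 1) / (2 * δ)) * Real.log ((Fintype.card V : ℝ) / ε) ≤ t →
      ∀ η : V → Bool, tvDist (fun σ => NormedSpace.exp (t • nvQ G δ) η σ) μ ≤ ε := by
    intro t ht η
    refine tvDist_le_of_vecMul_eq_self hμ0 hμ1
      (vecMul_exp_eq_self (by rw [vecMul_smul, hstat, smul_zero])) η fun A τ => ?_
    refine (abs_sum_exp_nvQ_sub_le hδ.le hdeg (hT.trans ht) A η τ).trans
      (mul_exp_neg_le_of_inv_mul_log_le (Nat.cast_nonneg _) hε0 (by positivity) ?_)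
    rwa [inv_div]
  exact ⟨hmix, csInf_le ⟨0, fun _ h => h.1⟩ ⟨hT, hmix _ le_rfl⟩⟩
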